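/- Let V : ℝⁿ → ℝⁿ be a C¹ vector field and φ : ℝⁿ → ℝ a C¹ function such that the Lie derivative of φ along V satisfies ∇φ(x) ⬝ V(x) = K(x) · φ(x) for all x, where K is continuous. If X : ℝ → ℝⁿ is a solution of the ODE X' = V(X) with φ(X(0)) = 0, then φ(X(t)) = 0 for all t in the interval of existence. -/

import Mathlib

/-! Along a solution `X`, the function `ψ = φ ∘ X` satisfies the scalar linear equation
`ψ' = (K ∘ X) ψ` with `ψ 0 = 0`. On every compact subinterval the coefficient `K ∘ X` is bounded,
so the right-hand side is Lipschitz in `ψ` and uniqueness of solutions forces `ψ` to agree with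
the zero solution. -/

open Set

theorem Set.OrdConnected.eqOn_zero_of_hasDerivAt_eq_smul_self {E : Type*} [NormedAddCommGroup E]
    [NormedSpace ℝ E] {ψ : ℝ → E} {c : ℝ → ℝ} {I : Set ℝ} (hI : I.OrdConnected)
    (hc : ContinuousOn c I) (hψ : ∀ t ∈ I, HasDerivAt ψ (c t • ψ t) t) {t₀ : ℝ} (ht₀ : t₀ ∈ I)
    (hψ₀ : ψ t₀ = 0) : EqOn ψ 0 I := by
  intro t ht
  have hJ : uIcc t₀ t ⊆ I := hI.uIcc_subset ht₀ ht
  obtain ⟨C, hC⟩ := isCompact_uIcc.exists_bound_of_continuousOn (hc.mono hJ)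
  have hlip : ∀ s ∈ uIcc t₀ t,
      LipschitzOnWith ⟨max C 0, le_max_right _ _⟩ (c s • · : E → E) univ := fun s hs ↦
    ((lipschitzWith_smul (c s)).weaken ((hC s hs).trans (le_max_left _ _))).lipschitzOnWith
  have hψc : ContinuousOn ψ (uIcc t₀ t) := fun s hs ↦
    (hψ s (hJ hs)).continuousAt.continuousWithinAt
  have hzero (s : ℝ) (a : Set ℝ) : HasDerivWithinAt (0 : ℝ → E) (c s • (0 : ℝ → E) s) a s := by
    rw [Pi.zero_apply, smul_zero]
    exact hasDerivWithinAt_const s a 0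
  rcases le_total t₀ t with hle | hle
  · rw [uIcc_of_le hle] at hJ hlip hψc
    exact ODE_solution_unique_of_mem_Icc_right (fun s hs ↦ hlip s (Ico_subset_Icc_self hs)) hψc
      (fun s hs ↦ (hψ s (hJ (Ico_subset_Icc_self hs))).hasDerivWithinAt) (fun _ _ ↦ mem_univ _)
      continuousOn_const (fun s _ ↦ hzero s _) (fun _ _ ↦ mem_univ _) hψ₀ ⟨hle, le_rfl⟩
  · rw [uIcc_of_ge hle] at hJ hlip hψc
    exact ODE_solution_unique_of_mem_Icc_left (fun s hs ↦ hlip s (Ioc_subset_Icc_self hs)) hψc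
      (fun s hs ↦ (hψ s (hJ (Ioc_subset_Icc_self hs))).hasDerivWithinAt) (fun _ _ ↦ mem_univ _)
      continuousOn_const (fun s _ ↦ hzero s _) (fun _ _ ↦ mem_univ _) hψ₀ ⟨le_rfl, hle⟩

theorem darboux_invariance_general
    (n : ℕ) (V : (Fin n → ℝ) → (Fin n → ℝ))
    (φ : (Fin n → ℝ) → ℝ) (hφ : ContDiff ℝ 1 φ)
    (K : (Fin n → ℝ) → ℝ) (hK : Continuous K)
    (hcof : ∀ x, fderiv ℝ φ x (V x) = K x * φ x)
    (I : Set ℝ) (hI : I.OrdConnected) (h0 : (0 : ℝ) ∈ I)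
    (X : ℝ → (Fin n → ℝ)) (hX : ∀ t ∈ I, HasDerivAt X (V (X t)) t)
    (hinit : φ (X 0) = 0) :
    ∀ t ∈ I, φ (X t) = 0 := by
  have hlie : ∀ t ∈ I, HasDerivAt (φ ∘ X) (K (X t) • (φ ∘ X) t) t := fun t ht ↦ by
    simpa only [hcof, smul_eq_mul, Function.comp_apply] using
      ((hφ.differentiable one_ne_zero (X t)).hasFDerivAt.comp_hasDerivAt t (hX t ht))
  have hKX : ContinuousOn (K ∘ X) I :=
    hK.comp_continuousOn fun t ht ↦ (hX t ht).continuousAt.continuousWithinAt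
  exact fun t ht ↦ hI.eqOn_zero_of_hasDerivAt_eq_smul_self hKX hlie h0 hinit ht

/-- Darboux invariance theorem: if `φ` admits a cofactor `K` (i.e. `∇φ ⬝ V = K·φ`),
then the zero set of `φ` is invariant along solutions of `X' = V(X)`. -/
theorem darboux_invariance
    (n : ℕ) (V : (Fin n → ℝ) → (Fin n → ℝ)) (hV : ContDiff ℝ 1 V)
    (φ : (Fin n → ℝ) → ℝ) (hφ : ContDiff ℝ 1 φ)
    (K : (Fin n → ℝ) → ℝ) (hK : Continuous K)
    (hcof : ∀ x, fderiv ℝ φ x (V x) = K x * φ x)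
    (I : Set ℝ) (hI : I.OrdConnected) (h0 : (0 : ℝ) ∈ I)
    (X : ℝ → (Fin n → ℝ)) (hX : ∀ t ∈ I, HasDerivAt X (V (X t)) t)
    (hinit : φ (X 0) = 0) :
    ∀ t ∈ I, φ (X t) = 0 :=
  darboux_invariance_general n V φ hφ K hK hcof I hI h0 X hX hinit
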